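/- Generation lemma for sums: for any context Γ, terms t, u, and type T, if Γ ⊢ t+u : T is derivable in Add, then there exist types R and S such that Γ ⊢ t : R and Γ ⊢ u : S are derivable in Add and R+S ≡ T. -/

import Mathlib

set_option maxHeartbeats 1000000

/-! ## Terms of the non-deterministic call-by-value λ-calculus (de Bruijn indices) -/

inductive Tm : Type
  | var : ℕ → Tm
  | lam : Tm → Tm
  | app : Tm → Tm → Tm
  | add : Tm → Tm → Tm
  | zero : Tm
  deriving DecidableEq

namespace Tm

/-- Values: variables and abstractions. -/
inductive IsValue : Tm → Prop
  | var (n : ℕ) : IsValue (var n)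
  | lam (t : Tm) : IsValue (lam t)

/-- de Bruijn shifting: add `d` to every variable index `≥ c`. -/
def shift (d c : ℕ) : Tm → Tm
  | var n => if n < c then var n else var (n + d)
  | lam t => lam (shift d (c + 1) t)
  | app t u => app (shift d c t) (shift d c u)
  | add t u => add (shift d c t) (shift d c u)
  | zero => zero

/-- Capture-avoiding substitution of the variable `k` by `v` (removing the binder). -/
def subst (k : ℕ) (v : Tm) : Tm → Tm
  | var n => if n = k then shift k 0 v else if k < n then var (n - 1) else var n
  | lam t => lam (subst (k + 1) v t)
  | app t u => app (subst k v t) (subst k v u)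
  | add t u => add (subst k v t) (subst k v u)
  | zero => zero

/-- `ClosedUnder k t`: every free variable of `t` has index `< k`. -/
def ClosedUnder (k : ℕ) : Tm → Prop
  | var n => n < k
  | lam t => ClosedUnder (k + 1) t
  | app t u => ClosedUnder k t ∧ ClosedUnder k u
  | add t u => ClosedUnder k t ∧ ClosedUnder k u
  | zero => True

/-- Closed terms. -/
def Closed (t : Tm) : Prop := ClosedUnder 0 t

end Tm

open Tm

/-- The AC-equivalence on terms: the least congruence making `+`
associative and commutative (terms are considered modulo `Aeq`). -/
inductive Aeq : Tm → Tm → Prop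
  | refl (t : Tm) : Aeq t t
  | symm : Aeq t u → Aeq u t
  | trans : Aeq t u → Aeq u s → Aeq t s
  | comm (t u : Tm) : Aeq (.add t u) (.add u t)
  | assoc (t u s : Tm) : Aeq (.add t (.add u s)) (.add (.add t u) s)
  | lamCongr : Aeq t t' → Aeq (.lam t) (.lam t')
  | appCongr : Aeq t t' → Aeq u u' → Aeq (.app t u) (.app t' u')
  | addCongr : Aeq t t' → Aeq u u' → Aeq (.add t u) (.add t' u')

/-- One-step reduction (the five rewrite rules plus β, closed under all
contexts, and performed modulo the AC-equivalence of terms). -/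
inductive Step : Tm → Tm → Prop
  | distrRight (t u s : Tm) : Step (.app (.add t u) s) (.add (.app t s) (.app u s))
  | distrLeft (t u s : Tm) : Step (.app t (.add u s)) (.add (.app t u) (.app t s))
  | zeroApp (t : Tm) : Step (.app .zero t) .zero
  | appZero (t : Tm) : Step (.app t .zero) .zero
  | addZero (t : Tm) : Step (.add t .zero) t
  | beta (t v : Tm) : IsValue v → Step (.app (.lam t) v) (Tm.subst 0 v t)
  | appLeft : Step t t' → Step (.app t u) (.app t' u)
  | appRight : Step u u' → Step (.app t u) (.app t u')
  | addLeft : Step t t' → Step (.add t u) (.add t' u)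
  | addRight : Step u u' → Step (.add t u) (.add t u')
  | lamCongr : Step t t' → Step (.lam t) (.lam t')
  | ac : Aeq t t' → Step t' u' → Aeq u' u → Step t u

/-- Strong normalisation of a term: accessibility of the inverse reduction. -/
def SN (t : Tm) : Prop := Acc (fun a b => Step b a) t

/-- The set of strongly normalising closed terms. -/
def SNset : Set Tm := {t | Closed t ∧ SN t}

/-- Pseudo-values: abstractions and sums of pseudo-values. -/
inductive PseudoValue : Tm → Prop
  | lam (t : Tm) : PseudoValue (.lam t)
  | add : PseudoValue t → PseudoValue u → PseudoValue (.add t u)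

/-- Neutral terms: closed terms that are not pseudo-values. -/
def Neutral (t : Tm) : Prop := Closed t ∧ ¬ PseudoValue t

/-- The set of one-step reducts of `t`. -/
def Red (t : Tm) : Set Tm := {u | Step t u}

/-- The set of reducts (in any number of steps, including zero) of terms of `S`. -/
def RedStar (S : Set Tm) : Set Tm := {u | ∃ t ∈ S, Relation.ReflTransGen Step t u}

/-- The closure of a set of terms under (CR3). -/
inductive Clo (S : Set Tm) : Tm → Prop
  | base {t : Tm} : t ∈ S → Clo S t
  | step {t : Tm} : Neutral t → (∀ u, Step t u → Clo S u) → Clo S t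

/-- `clo S`: the least set containing `S` and closed under (CR3). -/
def clo (S : Set Tm) : Set Tm := {t | Clo S t}

/-- Reducibility candidates. -/
structure IsCandidate (A : Set Tm) : Prop where
  cr1 : A ⊆ SNset
  cr2 : ∀ t ∈ A, Red t ⊆ A
  cr3 : ∀ t, Neutral t → Red t ⊆ A → t ∈ A

/-- The arrow operator on sets of closed terms. -/
def CArrow (A B : Set Tm) : Set Tm := {t | Closed t ∧ ∀ u ∈ A, Tm.app t u ∈ B}

/-- The sum of two sets of (AC-classes of) terms. -/
def CSum (A B : Set Tm) : Set Tm := {s | ∃ t ∈ A, ∃ u ∈ B, Aeq s (Tm.add t u)}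

/-- The ⊞ operator on reducibility candidates. -/
def CPlus (A B : Set Tm) : Set Tm := clo (CSum A B ∪ A ∪ B)

/-! ## Types of the Add type system -/

mutual
  /-- Unit types. -/
  inductive UTy : Type
    | var : ℕ → UTy
    | arrow : UTy → Ty → UTy
    | all : UTy → UTy

  /-- Types. -/
  inductive Ty : Type
    | unit : UTy → Ty
    | add : Ty → Ty → Ty
    | zero : Ty
end

mutual
  /-- Shifting of type variables in unit types. -/
  def UTy.shift (d c : ℕ) : UTy → UTy
    | .var n => if n < c then .var n else .var (n + d)
    | .arrow U T => .arrow (UTy.shift d c U) (Ty.shift d c T)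
    | .all U => .all (UTy.shift d (c + 1) U)

  /-- Shifting of type variables in types. -/
  def Ty.shift (d c : ℕ) : Ty → Ty
    | .unit U => .unit (UTy.shift d c U)
    | .add T R => .add (Ty.shift d c T) (Ty.shift d c R)
    | .zero => .zero
end

mutual
  /-- Substitution of the (bound) type variable `k` by `V` in a unit type. -/
  def UTy.subst (k : ℕ) (V : UTy) : UTy → UTy
    | .var n => if n = k then UTy.shift k 0 V else if k < n then .var (n - 1) else .var n
    | .arrow U T => .arrow (UTy.subst k V U) (Ty.subst k V T)
    | .all U => .all (UTy.subst (k + 1) V U)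

  /-- Substitution of the (bound) type variable `k` by `V` in a type. -/
  def Ty.subst (k : ℕ) (V : UTy) : Ty → Ty
    | .unit U => .unit (UTy.subst k V U)
    | .add T R => .add (Ty.subst k V T) (Ty.subst k V R)
    | .zero => .zero
end

/-- Iterated substitution `U[V⃗/X⃗]` for a unit type under `|Vs|` quantifiers. -/
def UTy.msubst (Vs : List UTy) (U : UTy) : UTy := Vs.foldl (fun A V => UTy.subst 0 V A) U

/-- Iterated substitution `T[V⃗/X⃗]` for a type under `|Vs|` quantifiers. -/
def Ty.msubst (Vs : List UTy) (T : Ty) : Ty := Vs.foldl (fun A V => Ty.subst 0 V A) T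

mutual
  /-- Substitution of the free type variable `X` (seen at depth `c`) by `V` in a unit type. -/
  def UTy.replAux (X : ℕ) (V : UTy) (c : ℕ) : UTy → UTy
    | .var n => if n = X + c then UTy.shift c 0 V else .var n
    | .arrow U T => .arrow (UTy.replAux X V c U) (Ty.replAux X V c T)
    | .all U => .all (UTy.replAux X V (c + 1) U)

  /-- Substitution of the free type variable `X` (seen at depth `c`) by `V` in a type. -/
  def Ty.replAux (X : ℕ) (V : UTy) (c : ℕ) : Ty → Ty
    | .unit U => .unit (UTy.replAux X V c U)
    | .add T R => .add (Ty.replAux X V c T) (Ty.replAux X V c R)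
    | .zero => .zero
end

/-- Capture-avoiding substitution `U[V/X]` of a free type variable. -/
def UTy.repl (X : ℕ) (V : UTy) (U : UTy) : UTy := UTy.replAux X V 0 U

/-- Capture-avoiding substitution `T[V/X]` of a free type variable. -/
def Ty.repl (X : ℕ) (V : UTy) (T : Ty) : Ty := Ty.replAux X V 0 T

mutual
  /-- Abstraction of the free type variable `X` (at depth `c`), used to form `∀X.U`. -/
  def UTy.absAux (X c : ℕ) : UTy → UTy
    | .var n => if n = X + c then .var c else if c ≤ n then .var (n + 1) else .var n
    | .arrow U T => .arrow (UTy.absAux X c U) (Ty.absAux X c T)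
    | .all U => .all (UTy.absAux X (c + 1) U)

  /-- Abstraction of the free type variable `X` (at depth `c`) in a type. -/
  def Ty.absAux (X c : ℕ) : Ty → Ty
    | .unit U => .unit (UTy.absAux X c U)
    | .add T R => .add (Ty.absAux X c T) (Ty.absAux X c R)
    | .zero => .zero
end

/-- `∀X.U`: universal quantification of the free type variable `X` in `U`. -/
def UTy.genAll (X : ℕ) (U : UTy) : UTy := .all (UTy.absAux X 0 U)

mutual
  /-- `X` occurs free in a unit type. -/
  def UTy.Free (n : ℕ) : UTy → Prop
    | .var m => m = n
    | .arrow U T => UTy.Free n U ∨ Ty.Free n T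
    | .all U => UTy.Free (n + 1) U

  /-- `X` occurs free in a type. -/
  def Ty.Free (n : ℕ) : Ty → Prop
    | .unit U => UTy.Free n U
    | .add T R => Ty.Free n T ∨ Ty.Free n R
    | .zero => False
end

mutual
  /-- Equivalence of unit types (the least congruence making `+` on types
  associative, commutative, with neutral element `𝟘`). -/
  inductive UEq : UTy → UTy → Prop
    | refl (U : UTy) : UEq U U
    | symm : UEq U V → UEq V U
    | trans : UEq U V → UEq V W → UEq U W
    | arrow : UEq U U' → TEq T T' → UEq (.arrow U T) (.arrow U' T')
    | all : UEq U U' → UEq (.all U) (.all U')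

  /-- Equivalence of types: the least congruence such that
  `T+R ≡ R+T`, `T+(R+S) ≡ (T+R)+S` and `T+𝟘 ≡ T`. -/
  inductive TEq : Ty → Ty → Prop
    | refl (T : Ty) : TEq T T
    | symm : TEq T R → TEq R T
    | trans : TEq T R → TEq R S → TEq T S
    | unit : UEq U U' → TEq (.unit U) (.unit U')
    | addCongr : TEq T T' → TEq R R' → TEq (.add T R) (.add T' R')
    | comm (T R : Ty) : TEq (.add T R) (.add R T)
    | assoc (T R S : Ty) : TEq (.add T (.add R S)) (.add (.add T R) S)
    | zero (T : Ty) : TEq (.add T .zero) T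
end

/-- `Σ_{i} T_i`, with the empty sum being `𝟘`. -/
def sumT (Ts : List Ty) : Ty := Ts.foldl Ty.add Ty.zero

/-- `∀X₁.…∀X_k.U`. -/
def allN : ℕ → UTy → UTy
  | 0, U => U
  | k + 1, U => .all (allN k U)

/-- Lifting of type variables in a typing context (for ∀-introduction). -/
def liftCtx (Γ : List UTy) : List UTy := Γ.map (UTy.shift 1 0)

/-! ## The Add type system -/

/-- Typing judgements of the Add type system. -/
inductive Typing : List UTy → Tm → Ty → Prop
  | ax {Γ : List UTy} {n : ℕ} {U : UTy} : Γ[n]? = some U → Typing Γ (.var n) (.unit U)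
  | axZero {Γ : List UTy} : Typing Γ .zero .zero
  | equiv {Γ t T R} : Typing Γ t T → TEq T R → Typing Γ t R
  | arrI {Γ U t T} : Typing (U :: Γ) t T → Typing Γ (.lam t) (.unit (.arrow U T))
  | arrE {Γ t u} {k : ℕ} {U : UTy} {Ts : List Ty} {Vs : List (List UTy)} :
      Ts ≠ [] → Vs ≠ [] → (∀ V ∈ Vs, V.length = k) →
      Typing Γ t (sumT (Ts.map fun Ti => .unit (allN k (.arrow U Ti)))) →
      Typing Γ u (sumT (Vs.map fun Vj => .unit (UTy.msubst Vj U))) →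
      Typing Γ (.app t u)
        (sumT ((Ts.map fun Ti => Vs.map fun Vj => Ty.msubst Vj Ti).flatten))
  | addI {Γ t u T R} : Typing Γ t T → Typing Γ u R → Typing Γ (.add t u) (.add T R)
  | allE {Γ t U} (V : UTy) : Typing Γ t (.unit (.all U)) → Typing Γ t (.unit (UTy.subst 0 V U))
  | allI {Γ t U} : Typing (liftCtx Γ) t (.unit U) → Typing Γ t (.unit (.all U))

/-! ## Interpretation of types by reducibility candidates -/

/-- Extension of a valuation. -/
def consV (A : Set Tm) (ρ : ℕ → Set Tm) : ℕ → Set Tm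
  | 0 => A
  | n + 1 => ρ n

mutual
  /-- Interpretation of unit types. -/
  def interpU : UTy → (ℕ → Set Tm) → Set Tm
    | .var n, ρ => ρ n
    | .arrow U T, ρ => CArrow (interpU U ρ) (interpT T ρ)
    | .all U, ρ => {t | ∀ A : Set Tm, IsCandidate A → t ∈ interpU U (consV A ρ)}

  /-- Interpretation of types. -/
  def interpT : Ty → (ℕ → Set Tm) → Set Tm
    | .unit U, ρ => interpU U ρ
    | .add T R, ρ => CPlus (interpT T ρ) (interpT R ρ)
    | .zero, _ => clo ∅
end

/-- Lifting of a simultaneous substitution under a binder. -/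
def liftSub (σ : ℕ → Tm) : ℕ → Tm
  | 0 => .var 0
  | n + 1 => Tm.shift 1 0 (σ n)

/-- Simultaneous substitution `t_σ` of all free term variables of `t`. -/
def Tm.msubst (σ : ℕ → Tm) : Tm → Tm
  | .var n => σ n
  | .lam t => .lam (Tm.msubst (liftSub σ) t)
  | .app t u => .app (Tm.msubst σ t) (Tm.msubst σ u)
  | .add t u => .add (Tm.msubst σ t) (Tm.msubst σ u)
  | .zero => .zero

/-! ## The relations ⋖ and ≼ on types -/

/-- The relation `⋖` on unit types: `U₁ ⋖ U₂` iff either `U₂ ≡ ∀X.U₁`, or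
`U₁ ≡ ∀X.U'` and `U₂ ≡ U'[V/X]`. -/
inductive SSub : UTy → UTy → Prop
  | gen {U₁ U₂ : UTy} (X : ℕ) : UEq U₂ (UTy.genAll X U₁) → SSub U₁ U₂
  | inst {U₁ U₂ : UTy} (U' V : UTy) : UEq U₁ (.all U') → UEq U₂ (UTy.subst 0 V U') →
      SSub U₁ U₂

/-- The relation `≼`: the reflexive (with respect to `≡`) and transitive
closure of `⋖`, on types. -/
inductive TPre : Ty → Ty → Prop
  | ofEq : TEq T T' → TPre T T'
  | ofSSub {U V : UTy} : SSub U V → TPre (.unit U) (.unit V)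
  | trans : TPre T T' → TPre T' T'' → TPre T T''

/-! ## Trees and the structured type system Add_struct -/

/-- Binary trees with two kinds of leaves: `ℓ`-leaves and `𝟘`-leaves. -/
inductive ATree : Type
  | leaf : ATree
  | zleaf : ATree
  | node : ATree → ATree → ATree
  deriving DecidableEq

namespace ATree

/-- ATree composition: branch a copy of `A'` at each `ℓ`-leaf of `A`. -/
def comp : ATree → ATree → ATree
  | .leaf, A' => A'
  | .zleaf, _ => .zleaf
  | .node A B, A' => .node (comp A A') (comp B A')

/-- `LeafAt A w`: the word `w` (over `{l,r}`, here `{false,true}`) is the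
address of an `ℓ`-leaf of `A`. -/
inductive LeafAt : ATree → List Bool → Prop
  | leaf : LeafAt .leaf []
  | left {A B w} : LeafAt A w → LeafAt (.node A B) (false :: w)
  | right {A B w} : LeafAt B w → LeafAt (.node A B) (true :: w)

/-- Labelling of the `ℓ`-leaves of a tree by unit types, yielding a type. -/
def labelU : ATree → (List Bool → UTy) → Ty
  | .leaf, f => .unit (f [])
  | .zleaf, _ => .zero
  | .node A B, f => .add (labelU A fun w => f (false :: w)) (labelU B fun w => f (true :: w))

/-- Labelling of the `ℓ`-leaves of a tree by types, yielding a type. -/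
def labelT : ATree → (List Bool → Ty) → Ty
  | .leaf, f => f []
  | .zleaf, _ => .zero
  | .node A B, f => .add (labelT A fun w => f (false :: w)) (labelT B fun w => f (true :: w))

/-- Split an address of a leaf of `A ∘ A'` into the `A`-part and the `A'`-part. -/
def split : ATree → List Bool → List Bool × List Bool
  | .leaf, p => ([], p)
  | .zleaf, p => ([], p)
  | .node A _, false :: p => ((split A p).1.cons false, (split A p).2)
  | .node _ B, true :: p => ((split B p).1.cons true, (split B p).2)
  | .node _ _, [] => ([], [])

end ATree

/-- Typing derivations of the structured type system Add_struct. -/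
inductive SDeriv : List UTy → Tm → Ty → Type
  | ax (Γ : List UTy) (n : ℕ) (U : UTy) (h : Γ[n]? = some U) : SDeriv Γ (.var n) (.unit U)
  | axZero (Γ : List UTy) : SDeriv Γ .zero .zero
  | arrI {Γ U t T} (D : SDeriv (U :: Γ) t T) : SDeriv Γ (.lam t) (.unit (.arrow U T))
  | addI {Γ t u T R} (D₁ : SDeriv Γ t T) (D₂ : SDeriv Γ u R) :
      SDeriv Γ (.add t u) (.add T R)
  | allE {Γ t U} (V : UTy) (D : SDeriv Γ t (.unit (.all U))) :
      SDeriv Γ t (.unit (UTy.subst 0 V U))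
  | allI {Γ t U} (D : SDeriv (liftCtx Γ) t (.unit U)) : SDeriv Γ t (.unit (.all U))
  | arrE {Γ t u} (A A' : ATree) (k : ℕ) (U : UTy) (Tf : List Bool → Ty)
      (Vf : List Bool → List UTy)
      (hlen : ∀ v, A'.LeafAt v → (Vf v).length = k)
      (D₁ : SDeriv Γ t (A.labelU fun w => allN k (.arrow U (Tf w))))
      (D₂ : SDeriv Γ u (A'.labelU fun v => UTy.msubst (Vf v) U)) :
      SDeriv Γ (.app t u)
        ((A.comp A').labelT fun p => Ty.msubst (Vf (A.split p).2) (Tf (A.split p).1))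

/-! ## System F with pairs -/

/-- Terms of System F with pairs. -/
inductive FTm : Type
  | var : ℕ → FTm
  | lam : FTm → FTm
  | app : FTm → FTm → FTm
  | star : FTm
  | pair : FTm → FTm → FTm
  | pl : FTm → FTm
  | pr : FTm → FTm
  deriving DecidableEq

/-- Types of System F with pairs. -/
inductive FTy : Type
  | var : ℕ → FTy
  | arrow : FTy → FTy → FTy
  | all : FTy → FTy
  | one : FTy
  | prod : FTy → FTy → FTy
  deriving DecidableEq

/-- Shifting of term variables in F-terms. -/
def FTm.shift (d c : ℕ) : FTm → FTm
  | .var n => if n < c then .var n else .var (n + d)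
  | .lam t => .lam (FTm.shift d (c + 1) t)
  | .app t u => .app (FTm.shift d c t) (FTm.shift d c u)
  | .star => .star
  | .pair t u => .pair (FTm.shift d c t) (FTm.shift d c u)
  | .pl t => .pl (FTm.shift d c t)
  | .pr t => .pr (FTm.shift d c t)

/-- Substitution of the term variable `k` by `v` in an F-term. -/
def FTm.subst (k : ℕ) (v : FTm) : FTm → FTm
  | .var n => if n = k then FTm.shift k 0 v else if k < n then .var (n - 1) else .var n
  | .lam t => .lam (FTm.subst (k + 1) v t)
  | .app t u => .app (FTm.subst k v t) (FTm.subst k v u)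
  | .star => .star
  | .pair t u => .pair (FTm.subst k v t) (FTm.subst k v u)
  | .pl t => .pl (FTm.subst k v t)
  | .pr t => .pr (FTm.subst k v t)

/-- Shifting of type variables in F-types. -/
def FTy.shift (d c : ℕ) : FTy → FTy
  | .var n => if n < c then .var n else .var (n + d)
  | .arrow A B => .arrow (FTy.shift d c A) (FTy.shift d c B)
  | .all A => .all (FTy.shift d (c + 1) A)
  | .one => .one
  | .prod A B => .prod (FTy.shift d c A) (FTy.shift d c B)

/-- Substitution of the type variable `k` by `B` in an F-type. -/
def FTy.subst (k : ℕ) (B : FTy) : FTy → FTy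
  | .var n => if n = k then FTy.shift k 0 B else if k < n then .var (n - 1) else .var n
  | .arrow A A' => .arrow (FTy.subst k B A) (FTy.subst k B A')
  | .all A => .all (FTy.subst (k + 1) B A)
  | .one => .one
  | .prod A A' => .prod (FTy.subst k B A) (FTy.subst k B A')

/-- One-step reduction in System F with pairs. -/
inductive FStep : FTm → FTm → Prop
  | beta (t u : FTm) : FStep (.app (.lam t) u) (FTm.subst 0 u t)
  | plPair (t u : FTm) : FStep (.pl (.pair t u)) t
  | prPair (t u : FTm) : FStep (.pr (.pair t u)) u
  | eta (t : FTm) : FStep (.lam (.app (FTm.shift 1 0 t) (.var 0))) t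
  | sp (p : FTm) : FStep (.pair (.pl p) (.pr p)) p
  | lamCongr : FStep t t' → FStep (.lam t) (.lam t')
  | appLeft : FStep t t' → FStep (.app t u) (.app t' u)
  | appRight : FStep u u' → FStep (.app t u) (.app t u')
  | pairLeft : FStep t t' → FStep (.pair t u) (.pair t' u)
  | pairRight : FStep u u' → FStep (.pair t u) (.pair t u')
  | plCongr : FStep t t' → FStep (.pl t) (.pl t')
  | prCongr : FStep t t' → FStep (.pr t) (.pr t')

/-- Typing in System F with pairs. -/
inductive FTyping : List FTy → FTm → FTy → Prop
  | ax {Γ n A} : Γ[n]? = some A → FTyping Γ (.var n) A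
  | star {Γ} : FTyping Γ .star .one
  | lam {Γ A t B} : FTyping (A :: Γ) t B → FTyping Γ (.lam t) (.arrow A B)
  | app {Γ t u A B} : FTyping Γ t (.arrow A B) → FTyping Γ u A → FTyping Γ (.app t u) B
  | pair {Γ t u A B} : FTyping Γ t A → FTyping Γ u B → FTyping Γ (.pair t u) (.prod A B)
  | pl {Γ t A B} : FTyping Γ t (.prod A B) → FTyping Γ (.pl t) A
  | pr {Γ t A B} : FTyping Γ t (.prod A B) → FTyping Γ (.pr t) B
  | allI {Γ t A} : FTyping (Γ.map (FTy.shift 1 0)) t A → FTyping Γ t (.all A)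
  | allE {Γ t A} (B : FTy) : FTyping Γ t (.all A) → FTyping Γ t (FTy.subst 0 B A)

/-! ## The translation from Add_struct into System F with pairs -/

mutual
  /-- Translation of unit types into F-types. -/
  def transU : UTy → FTy
    | .var n => .var n
    | .arrow U T => .arrow (transU U) (transT T)
    | .all U => .all (transU U)

  /-- Translation of Add types into F-types. -/
  def transT : Ty → FTy
    | .unit U => transU U
    | .add T R => .prod (transT T) (transT R)
    | .zero => .one
end

/-- Labelling of the `ℓ`-leaves of a tree by F-terms (pairs at the nodes, `⋆`
at the `𝟘`-leaves), yielding an F-term. -/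
def ATree.labelF : ATree → (List Bool → FTm) → FTm
  | .leaf, f => f []
  | .zleaf, _ => .star
  | .node A B, f => .pair (ATree.labelF A fun w => f (false :: w))
      (ATree.labelF B fun w => f (true :: w))

/-- `π_{w̄}(t)`: the composite of projections along the mirror of the word `w`. -/
def projMirror (w : List Bool) (t : FTm) : FTm :=
  w.foldl (fun s b => if b then .pr s else .pl s) t

/-- The translation `|t|_D` of a term typed in Add_struct by a derivation `D`
into an F-term. -/
def transD : ∀ {Γ : List UTy} {t : Tm} {T : Ty}, SDeriv Γ t T → FTm
  | _, _, _, .ax _ n _ _ => .var n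
  | _, _, _, .axZero _ => .star
  | _, _, _, .arrI D => .lam (transD D)
  | _, _, _, .addI D₁ D₂ => .pair (transD D₁) (transD D₂)
  | _, _, _, .allE _ D => transD D
  | _, _, _, .allI D => transD D
  | _, _, _, .arrE A A' _ _ _ _ _ D₁ D₂ =>
      (A.comp A').labelF fun p =>
        .app (projMirror (A.split p).1 (transD D₁)) (projMirror (A.split p).2 (transD D₂))

/-! ## Structural reduction (without AC and without the rule `t+𝟎 → t`) -/

/-- One-step reduction by a rule other than `t+𝟎 → t` (and not using the
AC-equivalence, which is absent from Add_struct). -/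
inductive SStep : Tm → Tm → Prop
  | distrRight (t u s : Tm) : SStep (.app (.add t u) s) (.add (.app t s) (.app u s))
  | distrLeft (t u s : Tm) : SStep (.app t (.add u s)) (.add (.app t u) (.app t s))
  | zeroApp (t : Tm) : SStep (.app .zero t) .zero
  | appZero (t : Tm) : SStep (.app t .zero) .zero
  | beta (t v : Tm) : IsValue v → SStep (.app (.lam t) v) (Tm.subst 0 v t)
  | appLeft : SStep t t' → SStep (.app t u) (.app t' u)
  | appRight : SStep u u' → SStep (.app t u) (.app t u')
  | addLeft : SStep t t' → SStep (.add t u) (.add t' u)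
  | addRight : SStep u u' → SStep (.add t u) (.add t u')
  | lamCongr : SStep t t' → SStep (.lam t) (.lam t')

/-! ## The partial inverse translation -/

/-- Partial inverse translation on types. -/
def invTy : FTy → Option Ty
  | .var n => some (.unit (.var n))
  | .one => some .zero
  | .all A =>
    match invTy A with
    | some (.unit U) => some (.unit (.all U))
    | _ => none
  | .prod A B =>
    match invTy A, invTy B with
    | some T, some R => some (.add T R)
    | _, _ => none
  | .arrow A B =>
    match invTy A, invTy B with
    | some (.unit U), some T => some (.unit (.arrow U T))
    | _, _ => none

/-- An F-term of the shape `A[wv ↦ π_{w̄}(t) π_{v̄}(u)]` for a non-trivial tree. -/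
def IsTreeApp (s : FTm) : Prop :=
  ∃ (A A' : ATree) (t u : FTm), A.comp A' ≠ .leaf ∧ A.comp A' ≠ .zleaf ∧
    s = (A.comp A').labelF fun p =>
      .app (projMirror (A.split p).1 t) (projMirror (A.split p).2 u)

/-- The partial inverse translation on F-terms, as a relation. -/
inductive InvTm : FTm → Tm → Prop
  | var (n : ℕ) : InvTm (.var n) (.var n)
  | star : InvTm .star .zero
  | lam : InvTm t t' → InvTm (.lam t) (.lam t')
  | app : InvTm t t' → InvTm u u' → InvTm (.app t u) (.app t' u')
  | treeApp (A A' : ATree) {t u : FTm} {t' u' : Tm} :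
      A.comp A' ≠ .leaf → A.comp A' ≠ .zleaf → InvTm t t' → InvTm u u' →
      InvTm ((A.comp A').labelF fun p =>
          .app (projMirror (A.split p).1 t) (projMirror (A.split p).2 u))
        (.app t' u')
  | pair : ¬ IsTreeApp (.pair t u) → InvTm t t' → InvTm u u' →
      InvTm (.pair t u) (.add t' u')

/-!
Induct on the derivation of `Γ ⊢ t+u : T`; only (+I), (≡), (∀E) and (∀I) can end it. In the two
∀-rules `T` is a unit type, and since the number of unit summands is invariant under `≡`, one of
the summands `R`, `S` is `≡ 𝟘` and the other `≡ T`, so the rule can be applied to that summand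
alone. For (∀I) the `𝟘`-typed summand is typed in the lifted context; it is brought back to `Γ`
by the type-substitution lemma, instantiating the fresh type variable by itself.
-/

mutual
theorem UTy.shift_zero (c : ℕ) : ∀ A : UTy, UTy.shift 0 c A = A
  | .var n => by simp [UTy.shift]
  | .arrow U T => by simp [UTy.shift, UTy.shift_zero, Ty.shift_zero]
  | .all U => by simp [UTy.shift, UTy.shift_zero]

theorem Ty.shift_zero (c : ℕ) : ∀ A : Ty, Ty.shift 0 c A = A
  | .unit U => by simp [Ty.shift, UTy.shift_zero]
  | .add T R => by simp [Ty.shift, Ty.shift_zero]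
  | .zero => rfl
end

mutual
theorem UTy.shift_shift {j k c c' : ℕ} (h₁ : c' ≤ c) (h₂ : c ≤ c' + k) :
    ∀ A : UTy, UTy.shift j c (UTy.shift k c' A) = UTy.shift (j + k) c' A
  | .var n => by
      simp only [UTy.shift]
      split_ifs <;> simp only [UTy.shift] <;> split_ifs <;> first | rfl | omega | (congr 1; omega)
  | .arrow U T => by simp [UTy.shift, UTy.shift_shift h₁ h₂, Ty.shift_shift h₁ h₂]
  | .all U => by
      simp [UTy.shift, UTy.shift_shift (Nat.succ_le_succ h₁) (by omega : c + 1 ≤ c' + 1 + k)]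

theorem Ty.shift_shift {j k c c' : ℕ} (h₁ : c' ≤ c) (h₂ : c ≤ c' + k) :
    ∀ A : Ty, Ty.shift j c (Ty.shift k c' A) = Ty.shift (j + k) c' A
  | .unit U => by simp [Ty.shift, UTy.shift_shift h₁ h₂]
  | .add T R => by simp [Ty.shift, Ty.shift_shift h₁ h₂]
  | .zero => rfl
end

mutual
theorem UTy.subst_shift {j k c : ℕ} (V : UTy) (h : c ≤ k) :
    ∀ A : UTy, UTy.subst (j + k) V (UTy.shift j c A) = UTy.shift j c (UTy.subst k V A)
  | .var n => by
      simp only [UTy.shift, UTy.subst]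
      split_ifs <;> simp only [UTy.shift, UTy.subst] <;> split_ifs <;>
        first
        | rfl
        | omega
        | (congr 1; omega)
        | exact (UTy.shift_shift (Nat.zero_le c) (by omega) V).symm
  | .arrow U T => by simp [UTy.shift, UTy.subst, UTy.subst_shift V h, Ty.subst_shift V h]
  | .all U => by
      simp only [UTy.shift, UTy.subst]
      rw [show j + k + 1 = j + (k + 1) by omega, UTy.subst_shift V (by omega : c + 1 ≤ k + 1) U]

theorem Ty.subst_shift {j k c : ℕ} (V : UTy) (h : c ≤ k) :
    ∀ A : Ty, Ty.subst (j + k) V (Ty.shift j c A) = Ty.shift j c (Ty.subst k V A)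
  | .unit U => by simp [Ty.shift, Ty.subst, UTy.subst_shift V h]
  | .add T R => by simp [Ty.shift, Ty.subst, Ty.subst_shift V h]
  | .zero => rfl
end

mutual
theorem UTy.subst_shift_succ {j m c : ℕ} (W : UTy) (h₁ : c ≤ j) (h₂ : j ≤ m + c) :
    ∀ A : UTy, UTy.subst j W (UTy.shift (m + 1) c A) = UTy.shift m c A
  | .var n => by
      simp only [UTy.shift]
      split_ifs <;> simp only [UTy.subst] <;> split_ifs <;> first | rfl | omega
  | .arrow U T => by
      simp [UTy.shift, UTy.subst, UTy.subst_shift_succ W h₁ h₂, Ty.subst_shift_succ W h₁ h₂]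
  | .all U => by
      simp [UTy.shift, UTy.subst,
        UTy.subst_shift_succ W (Nat.succ_le_succ h₁) (by omega : j + 1 ≤ m + (c + 1))]

theorem Ty.subst_shift_succ {j m c : ℕ} (W : UTy) (h₁ : c ≤ j) (h₂ : j ≤ m + c) :
    ∀ A : Ty, Ty.subst j W (Ty.shift (m + 1) c A) = Ty.shift m c A
  | .unit U => by simp [Ty.shift, Ty.subst, UTy.subst_shift_succ W h₁ h₂]
  | .add T R => by simp [Ty.shift, Ty.subst, Ty.subst_shift_succ W h₁ h₂]
  | .zero => rfl
end

mutual
theorem UTy.subst_subst {j d : ℕ} (V W : UTy) :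
    ∀ A : UTy, UTy.subst (j + d) V (UTy.subst j W A)
      = UTy.subst j (UTy.subst d V W) (UTy.subst (j + d + 1) V A)
  | .var n => by
      simp only [UTy.subst]
      split_ifs <;> (try simp only [UTy.subst]) <;> (try split_ifs) <;>
        first
        | rfl
        | omega
        | exact UTy.subst_shift (c := 0) V (Nat.zero_le _) W
        | exact (UTy.subst_shift_succ (c := 0) _ (Nat.zero_le _) (by omega) V).symm
  | .arrow U T => by simp [UTy.subst, UTy.subst_subst V W, Ty.subst_subst V W]
  | .all U => by
      simp only [UTy.subst]
      rw [show j + d + 1 = j + 1 + d by omega, UTy.subst_subst (j := j + 1) V W U]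

theorem Ty.subst_subst {j d : ℕ} (V W : UTy) :
    ∀ A : Ty, Ty.subst (j + d) V (Ty.subst j W A)
      = Ty.subst j (UTy.subst d V W) (Ty.subst (j + d + 1) V A)
  | .unit U => by simp [Ty.subst, UTy.subst_subst V W]
  | .add T R => by simp [Ty.subst, Ty.subst_subst V W]
  | .zero => rfl
end

mutual
theorem UEq.subst {U U' : UTy} (k : ℕ) (V : UTy) :
    UEq U U' → UEq (UTy.subst k V U) (UTy.subst k V U')
  | .refl _ => .refl _
  | .symm h => (h.subst k V).symm
  | .trans h₁ h₂ => (h₁.subst k V).trans (h₂.subst k V)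
  | .arrow h₁ h₂ => .arrow (h₁.subst k V) (h₂.subst k V)
  | .all h => .all (h.subst (k + 1) V)

theorem TEq.subst {T T' : Ty} (k : ℕ) (V : UTy) :
    TEq T T' → TEq (Ty.subst k V T) (Ty.subst k V T')
  | .refl _ => .refl _
  | .symm h => (h.subst k V).symm
  | .trans h₁ h₂ => (h₁.subst k V).trans (h₂.subst k V)
  | .unit h => .unit (h.subst k V)
  | .addCongr h₁ h₂ => .addCongr (h₁.subst k V) (h₂.subst k V)
  | .comm _ _ => .comm _ _
  | .assoc _ _ _ => .assoc _ _ _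
  | .zero _ => .zero _
end

theorem UTy.subst_allN (k m : ℕ) (V U : UTy) :
    UTy.subst k V (allN m U) = allN m (UTy.subst (k + m) V U) := by
  induction m generalizing k with
  | zero => rfl
  | succ m ih => simp only [allN, UTy.subst, ih, Nat.add_right_comm k 1 m, Nat.add_assoc]

/-- In `msubst (W :: L)` the substituend `W` is read under the `L.length` binders that are still
to be instantiated. -/
def UTy.substList (k : ℕ) (V : UTy) : List UTy → List UTy
  | [] => []
  | W :: L => UTy.subst (k + L.length) V W :: UTy.substList k V L

@[simp]
theorem UTy.length_substList (k : ℕ) (V : UTy) (L : List UTy) :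
    (UTy.substList k V L).length = L.length := by
  induction L with
  | nil => rfl
  | cons W L ih => simp [UTy.substList, ih]

theorem UTy.subst_msubst (k : ℕ) (V : UTy) (L : List UTy) (U : UTy) :
    UTy.subst k V (UTy.msubst L U)
      = UTy.msubst (UTy.substList k V L) (UTy.subst (k + L.length) V U) := by
  induction L generalizing U with
  | nil => rfl
  | cons W L ih =>
      simp only [UTy.msubst, List.foldl_cons, UTy.substList] at *
      rw [ih]
      congr 1
      simpa [Nat.add_assoc] using UTy.subst_subst (j := 0) (d := k + L.length) V W U

theorem Ty.subst_msubst (k : ℕ) (V : UTy) (L : List UTy) (T : Ty) :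
    Ty.subst k V (Ty.msubst L T)
      = Ty.msubst (UTy.substList k V L) (Ty.subst (k + L.length) V T) := by
  induction L generalizing T with
  | nil => rfl
  | cons W L ih =>
      simp only [Ty.msubst, List.foldl_cons, UTy.substList] at *
      rw [ih]
      congr 1
      simpa [Nat.add_assoc] using Ty.subst_subst (j := 0) (d := k + L.length) V W T

theorem Ty.subst_sumT (k : ℕ) (V : UTy) (L : List Ty) :
    Ty.subst k V (sumT L) = sumT (L.map (Ty.subst k V)) := by
  suffices ∀ acc, Ty.subst k V (L.foldl Ty.add acc)
      = (L.map (Ty.subst k V)).foldl Ty.add (Ty.subst k V acc) from this Ty.zero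
  induction L with
  | nil => exact fun _ => rfl
  | cons T L ih => exact fun acc => ih _

theorem liftCtx_map_subst (k : ℕ) (V : UTy) (Γ : List UTy) :
    (liftCtx Γ).map (UTy.subst (k + 1) V) = liftCtx (Γ.map (UTy.subst k V)) := by
  simp only [liftCtx, List.map_map]
  exact List.map_congr_left fun A _ => by
    simpa [Nat.add_comm] using UTy.subst_shift (j := 1) (c := 0) V (Nat.zero_le k) A

theorem Typing.subst {Γ : List UTy} {s : Tm} {T : Ty} (h : Typing Γ s T) (k : ℕ) (V : UTy) :
    Typing (Γ.map (UTy.subst k V)) s (Ty.subst k V T) := by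
  induction h generalizing k with
  | ax hU => exact .ax (by simp [hU])
  | axZero => exact .axZero
  | equiv _ hTR ih => exact (ih k).equiv (hTR.subst k V)
  | arrI _ ih => exact .arrI (ih k)
  | addI _ _ ih₁ ih₂ => exact .addI (ih₁ k) (ih₂ k)
  | @allE Γ s U W _ ih =>
      have hcomm : UTy.subst k V (UTy.subst 0 W U)
          = UTy.subst 0 (UTy.subst k V W) (UTy.subst (k + 1) V U) := by
        simpa using UTy.subst_subst (j := 0) (d := k) V W U
      simpa [Ty.subst, hcomm] using (ih k).allE (UTy.subst k V W)
  | allI _ ih =>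
      refine .allI ?_
      rw [← liftCtx_map_subst]
      exact ih (k + 1)
  | @arrE Γ t u m U Ts Vs hTs hVs hlen _ _ ih₁ ih₂ =>
      have hfun := ih₁ k
      have harg := ih₂ k
      simp only [Ty.subst_sumT, List.map_map, Function.comp_def, Ty.subst, UTy.subst_allN,
        UTy.subst] at hfun harg
      have hargs : (Vs.map fun Vj => Ty.unit (UTy.subst k V (UTy.msubst Vj U)))
          = (Vs.map (UTy.substList k V)).map fun Vj =>
              .unit (UTy.msubst Vj (UTy.subst (k + m) V U)) := by
        rw [List.map_map]
        exact List.map_congr_left fun Vj hVj => by simp [UTy.subst_msubst, hlen Vj hVj]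
      have hres : ((Ts.map fun Ti => Vs.map fun Vj => Ty.msubst Vj Ti).flatten).map (Ty.subst k V)
          = ((Ts.map (Ty.subst (k + m) V)).map fun Ti =>
              (Vs.map (UTy.substList k V)).map fun Vj => Ty.msubst Vj Ti).flatten := by
        simp only [List.map_flatten, List.map_map, Function.comp_def]
        congr 1
        exact List.map_congr_left fun Ti _ =>
          List.map_congr_left fun Vj hVj => by rw [Ty.subst_msubst, hlen Vj hVj]
      rw [Ty.subst_sumT, hres]
      exact .arrE (by simpa using hTs) (by simpa using hVs) (by simpa using hlen)
        (by simpa [List.map_map, Function.comp_def] using hfun)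
        (hargs ▸ harg)

theorem Typing.of_liftCtx {Γ : List UTy} {s : Tm} {T : Ty} (h : Typing (liftCtx Γ) s T) :
    Typing Γ s (Ty.subst 0 (.var 0) T) := by
  have hΓ : (liftCtx Γ).map (UTy.subst 0 (.var 0)) = Γ := by
    simp only [liftCtx, List.map_map]
    refine List.map_id'' (fun A => ?_) Γ
    exact (UTy.subst_shift_succ (j := 0) (m := 0) (c := 0) _ le_rfl le_rfl A).trans
      (UTy.shift_zero 0 A)
  simpa only [hΓ] using h.subst 0 (.var 0)

def Ty.numUnits : Ty → ℕ
  | .unit _ => 1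
  | .add T R => T.numUnits + R.numUnits
  | .zero => 0

theorem TEq.numUnits_eq {T R : Ty} : TEq T R → T.numUnits = R.numUnits
  | .refl _ => rfl
  | .symm h => h.numUnits_eq.symm
  | .trans h₁ h₂ => h₁.numUnits_eq.trans h₂.numUnits_eq
  | .unit _ => rfl
  | .addCongr h₁ h₂ => by simp only [Ty.numUnits, h₁.numUnits_eq, h₂.numUnits_eq]
  | .comm _ _ => Nat.add_comm _ _
  | .assoc _ _ _ => (Nat.add_assoc _ _ _).symm
  | .zero _ => rfl

theorem Ty.teq_zero_of_numUnits_eq_zero : ∀ {T : Ty}, T.numUnits = 0 → TEq T .zero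
  | .unit _, h => absurd h one_ne_zero
  | .add T R, h => by
      obtain ⟨hT, hR⟩ := Nat.add_eq_zero_iff.mp h
      exact (TEq.addCongr (teq_zero_of_numUnits_eq_zero hT)
        (teq_zero_of_numUnits_eq_zero hR)).trans (.zero _)
  | .zero, _ => .refl _

theorem TEq.teq_zero_or_teq_zero_of_add_unit {R S : Ty} {U : UTy}
    (h : TEq (.add R S) (.unit U)) : TEq R .zero ∨ TEq S .zero := by
  have : R.numUnits + S.numUnits = 1 := h.numUnits_eq
  rcases Nat.add_eq_one_iff.mp this with ⟨hR, -⟩ | ⟨-, hS⟩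
  · exact .inl (Ty.teq_zero_of_numUnits_eq_zero hR)
  · exact .inr (Ty.teq_zero_of_numUnits_eq_zero hS)

theorem TEq.left_of_add_of_right_zero {R S T : Ty} (h : TEq (.add R S) T) (hS : TEq S .zero) :
    TEq R T :=
  ((TEq.zero R).symm.trans (.addCongr (.refl R) hS.symm)).trans h

theorem TEq.right_of_add_of_left_zero {R S T : Ty} (h : TEq (.add R S) T) (hR : TEq R .zero) :
    TEq S T :=
  ((TEq.comm S R).trans h).left_of_add_of_right_zero hR

theorem exists_summand_typings_of_unit_rule {Δ Γ : List UTy} {t u : Tm} {U U' : UTy}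
    (hunit : ∀ {w}, Typing Δ w (.unit U) → Typing Γ w (.unit U'))
    (hzero : ∀ {w}, Typing Δ w .zero → Typing Γ w .zero)
    (h : ∃ R S, Typing Δ t R ∧ Typing Δ u S ∧ TEq (.add R S) (.unit U)) :
    ∃ R S, Typing Γ t R ∧ Typing Γ u S ∧ TEq (.add R S) (.unit U') := by
  obtain ⟨R, S, ht, hu, hRS⟩ := h
  rcases hRS.teq_zero_or_teq_zero_of_add_unit with hR | hS
  · exact ⟨.zero, .unit U', hzero (ht.equiv hR),
      hunit (hu.equiv (hRS.right_of_add_of_left_zero hR)), (TEq.comm _ _).trans (.zero _)⟩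
  · exact ⟨.unit U', .zero, hunit (ht.equiv (hRS.left_of_add_of_right_zero hS)),
      hzero (hu.equiv hS), .zero _⟩

/-- **Generation lemma for sums** (Lemma 7.3).  If `Γ ⊢ t+u : T` then
`Γ ⊢ t : R` and `Γ ⊢ u : S` for some types `R`, `S` with `R+S ≡ T`. -/
theorem generation_add {Γ : List UTy} {t u : Tm} {T : Ty}
    (h : Typing Γ (.add t u) T) :
    ∃ (R S : Ty), Typing Γ t R ∧ Typing Γ u S ∧ TEq (.add R S) T := by
  generalize hs : Tm.add t u = s at h
  induction h with
  | ax | axZero | arrI | arrE => cases hs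
  | addI ht hu => cases hs; exact ⟨_, _, ht, hu, .refl _⟩
  | equiv _ hTR ih =>
      obtain ⟨R, S, ht, hu, hRS⟩ := ih hs
      exact ⟨R, S, ht, hu, hRS.trans hTR⟩
  | allE V _ ih => exact exists_summand_typings_of_unit_rule (·.allE V) id (ih hs)
  | allI _ ih => exact exists_summand_typings_of_unit_rule (·.allI) (·.of_liftCtx) (ih hs)
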